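/- The restriction map |_J from the Hecke algebra H to the parabolic Hecke algebra H_J, defined on the standard basis by T_w ↦ T_w if w ∈ W_J and T_w ↦ 0 otherwise, is left H_J-linear: for all g ∈ H_J and h ∈ H, (g·h)|_J = g·(h|_J). -/

import Mathlib

open LaurentPolynomial

noncomputable section
attribute [local instance] Classical.propDecidable

namespace HeckeRes

variable {B : Type} {W : Type} [Group W] {M : CoxeterMatrix B}

/-- The Laurent polynomial ring ℤ[q^{±1}]. -/
abbrev R : Type := LaurentPolynomial ℤ

/-- The variable q. -/
abbrev q : R := LaurentPolynomial.T 1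

/-- The inverse variable q⁻¹. -/
abbrev qinv : R := LaurentPolynomial.T (-1)

/-- Bruhat order: u ≤ w iff some reduced word for w has a subword with product u. -/
def bruhatLE (cs : CoxeterSystem M W) (u w : W) : Prop :=
  ∃ l : List B, cs.IsReduced l ∧ cs.wordProd l = w ∧
    ∃ l' : List B, l'.Sublist l ∧ cs.wordProd l' = u

def bruhatLT (cs : CoxeterSystem M W) (u w : W) : Prop :=
  bruhatLE cs u w ∧ u ≠ w

/-- The standard parabolic subgroup W_J. -/
def WJ (cs : CoxeterSystem M W) (J : Set B) : Subgroup W :=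
  Subgroup.closure (cs.simple '' J)

/-- Minimal length representatives of left cosets W/W_J: no right descents in J. -/
def IsMinRep (cs : CoxeterSystem M W) (J : Set B) (u : W) : Prop :=
  ∀ i ∈ J, cs.length (u * cs.simple i) = cs.length u + 1

/-- Minimal length representatives of right cosets W_J\W: no left descents in J. -/
def IsMinRepR (cs : CoxeterSystem M W) (J : Set B) (u : W) : Prop :=
  ∀ i ∈ J, cs.length (cs.simple i * u) = cs.length u + 1

variable {H : Type} [Ring H] [Algebra R H]

/-- Axioms making a basis of H indexed by W into the standard basis of the Hecke
algebra of (W,S), with quadratic relation T_s² = 1 + (q⁻¹ - q) T_s. -/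
structure IsHeckeBasis (cs : CoxeterSystem M W) (Tb : Module.Basis W R H) : Prop where
  T_one : Tb 1 = 1
  T_mul : ∀ u v : W, cs.length (u * v) = cs.length u + cs.length v →
    Tb u * Tb v = Tb (u * v)
  simple_mul : ∀ (i : B) (w : W), cs.length (cs.simple i * w) < cs.length w →
    Tb (cs.simple i) * Tb w = Tb (cs.simple i * w) + (qinv - q) • Tb w
  mul_simple : ∀ (w : W) (i : B), cs.length (w * cs.simple i) < cs.length w →
    Tb w * Tb (cs.simple i) = Tb (w * cs.simple i) + (qinv - q) • Tb w

/-- The restriction map |_J : H → H, T_w ↦ T_w if w ∈ W_J and 0 otherwise. -/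
def resMap (cs : CoxeterSystem M W) (Tb : Module.Basis W R H) (J : Set B) : H →ₗ[R] H :=
  Tb.constr R (fun w => if w ∈ WJ cs J then Tb w else 0)

/-- The parabolic subalgebra H_J, as the span of {T_w : w ∈ W_J}. -/
def HJ (cs : CoxeterSystem M W) (Tb : Module.Basis W R H) (J : Set B) : Submodule R H :=
  Submodule.span R (Tb '' (WJ cs J : Set W))

/-- A Laurent polynomial lies in ℤ[q]. -/
def IsPoly (p : R) : Prop := ∃ f : Polynomial ℤ, p = f.toLaurent

/-- Axioms for the Kazhdan–Lusztig basis: C_w = Σ_{x ≤ w} h_{x,w}(q) T_x with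
h_{w,w} = 1 and h_{x,w} ∈ qℤ[q] for x ≠ w. -/
structure IsKLBasis (cs : CoxeterSystem M W) (Tb : Module.Basis W R H) (C : W → H) : Prop where
  repr_self : ∀ w : W, Tb.repr (C w) w = 1
  repr_eq_zero : ∀ x w : W, ¬ bruhatLE cs x w → Tb.repr (C w) x = 0
  repr_mem : ∀ x w : W, x ≠ w → ∃ f : Polynomial ℤ,
    Tb.repr (C w) x = q * f.toLaurent

/-- The KL polynomial h_{y,x}. -/
def klPoly (Tb : Module.Basis W R H) (C : W → H) (y x : W) : R := Tb.repr (C x) y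

/-- μ(y,x): the coefficient of q in h_{y,x}. -/
def klMu (Tb : Module.Basis W R H) (C : W → H) (y x : W) : ℤ :=
  AddMonoidAlgebra.coeff (klPoly Tb C y x) 1

lemma resMap_basis (cs : CoxeterSystem M W) (Tb : Module.Basis W R H) (J : Set B) (w : W) :
    resMap cs Tb J (Tb w) = if w ∈ WJ cs J then Tb w else 0 :=
  Module.Basis.constr_basis Tb R _ w

lemma simple_mem_WJ (cs : CoxeterSystem M W) {J : Set B} {i : B} (hi : i ∈ J) :
    cs.simple i ∈ WJ cs J :=
  Subgroup.subset_closure ⟨i, hi, rfl⟩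

lemma mem_WJ_iff_simple_mul (cs : CoxeterSystem M W) {J : Set B} {i : B} (hi : i ∈ J)
    (w : W) : cs.simple i * w ∈ WJ cs J ↔ w ∈ WJ cs J := by
  constructor
  · intro h
    have := mul_mem ((WJ cs J).inv_mem (simple_mem_WJ cs hi)) h
    simpa [← mul_assoc] using this
  · intro h; exact mul_mem (simple_mem_WJ cs hi) h

lemma resMap_simple_mul_basis (cs : CoxeterSystem M W) (Tb : Module.Basis W R H)
    (hT : IsHeckeBasis cs Tb) {J : Set B} {i : B} (hi : i ∈ J) (w : W) :
    resMap cs Tb J (Tb (cs.simple i) * Tb w)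
      = Tb (cs.simple i) * resMap cs Tb J (Tb w) := by
  rcases cs.length_simple_mul w i with hlen | hlen
  · have hmul : Tb (cs.simple i) * Tb w = Tb (cs.simple i * w) :=
      hT.T_mul _ _ (by rw [hlen, cs.length_simple]; ring)
    rw [hmul, resMap_basis, resMap_basis]
    by_cases hw : w ∈ WJ cs J
    · rw [if_pos ((mem_WJ_iff_simple_mul cs hi w).mpr hw), if_pos hw, hmul]
    · rw [if_neg (fun h => hw ((mem_WJ_iff_simple_mul cs hi w).mp h)), if_neg hw, mul_zero]
  · have hmul : Tb (cs.simple i) * Tb w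
        = Tb (cs.simple i * w) + (qinv - q) • Tb w :=
      hT.simple_mul i w (by omega)
    rw [hmul, map_add, map_smul, resMap_basis, resMap_basis]
    by_cases hw : w ∈ WJ cs J
    · rw [if_pos ((mem_WJ_iff_simple_mul cs hi w).mpr hw), if_pos hw, hmul]
    · rw [if_neg (fun h => hw ((mem_WJ_iff_simple_mul cs hi w).mp h)), if_neg hw,
        mul_zero, smul_zero, add_zero]

lemma resMap_simple_mul (cs : CoxeterSystem M W) (Tb : Module.Basis W R H)
    (hT : IsHeckeBasis cs Tb) {J : Set B} {i : B} (hi : i ∈ J) (h : H) :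
    resMap cs Tb J (Tb (cs.simple i) * h)
      = Tb (cs.simple i) * resMap cs Tb J h := by
  have : (resMap cs Tb J).comp (LinearMap.mulLeft R (Tb (cs.simple i)))
      = (LinearMap.mulLeft R (Tb (cs.simple i))).comp (resMap cs Tb J) := by
    apply Module.Basis.ext Tb
    intro w
    simpa using resMap_simple_mul_basis cs Tb hT hi w
  exact DFunLike.congr_fun this h

lemma resMap_wordProd_mul (cs : CoxeterSystem M W) (Tb : Module.Basis W R H)
    (hT : IsHeckeBasis cs Tb) {J : Set B} (l : List B) (hl : ∀ i ∈ l, i ∈ J) (h : H) :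
    resMap cs Tb J (Tb (cs.wordProd l) * h)
      = Tb (cs.wordProd l) * resMap cs Tb J h := by
  induction l generalizing h with
  | nil => simp [cs.wordProd_nil, hT.T_one]
  | cons i t ih =>
    have hi : i ∈ J := hl i List.mem_cons_self
    have ht : ∀ j ∈ t, j ∈ J := fun j hj => hl j (List.mem_cons_of_mem i hj)
    set v := cs.wordProd t with hv
    rw [cs.wordProd_cons]
    rcases cs.length_simple_mul v i with hlen | hlen
    · have hmul : Tb (cs.simple i) * Tb v = Tb (cs.simple i * v) :=
        hT.T_mul _ _ (by rw [hlen, cs.length_simple]; ring)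
      rw [← hmul, mul_assoc, resMap_simple_mul cs Tb hT hi, ih ht, mul_assoc]
    · have hmul : Tb (cs.simple i) * Tb v
          = Tb (cs.simple i * v) + (qinv - q) • Tb v :=
        hT.simple_mul i v (by omega)
      have hTu : Tb (cs.simple i * v)
          = Tb (cs.simple i) * Tb v - (qinv - q) • Tb v := by
        rw [hmul, add_sub_cancel_right]
      rw [hTu, sub_mul, smul_mul_assoc, map_sub, map_smul, mul_assoc,
        resMap_simple_mul cs Tb hT hi, ih ht, sub_mul, mul_assoc, smul_mul_assoc]

lemma exists_word_of_mem_WJ (cs : CoxeterSystem M W) {J : Set B} {u : W}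
    (hu : u ∈ WJ cs J) : ∃ l : List B, (∀ i ∈ l, i ∈ J) ∧ cs.wordProd l = u := by
  induction hu using Subgroup.closure_induction with
  | mem x hx =>
    obtain ⟨i, hi, rfl⟩ := hx
    exact ⟨[i], by simpa using hi, by simp [cs.wordProd_singleton]⟩
  | one => exact ⟨[], by simp, cs.wordProd_nil⟩
  | mul x y _ _ hx hy =>
    obtain ⟨l1, h1, rfl⟩ := hx
    obtain ⟨l2, h2, rfl⟩ := hy
    refine ⟨l1 ++ l2, ?_, cs.wordProd_append l1 l2⟩
    intro i hi
    rcases List.mem_append.mp hi with h | h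
    exacts [h1 i h, h2 i h]
  | inv x _ hx =>
    obtain ⟨l, h1, rfl⟩ := hx
    exact ⟨l.reverse, fun i hi => h1 i (List.mem_reverse.mp hi), cs.wordProd_reverse l⟩

/-- the restriction map `|_J` is left `H_J`-linear. -/
theorem resMap_left_HJ_linear (cs : CoxeterSystem M W) (Tb : Module.Basis W R H)
    (hT : IsHeckeBasis cs Tb) (J : Set B)
    (g : H) (hg : g ∈ HJ cs Tb J) (h : H) :
    resMap cs Tb J (g * h) = g * resMap cs Tb J h := by
  induction hg using Submodule.span_induction with
  | mem x hx =>
    obtain ⟨u, hu, rfl⟩ := hx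
    obtain ⟨l, hl, rfl⟩ := exists_word_of_mem_WJ cs hu
    exact resMap_wordProd_mul cs Tb hT l hl h
  | zero => simp
  | add x y _ _ hx hy => rw [add_mul, map_add, hx, hy, add_mul]
  | smul a x _ hx => rw [smul_mul_assoc, map_smul, hx, smul_mul_assoc]

end HeckeRes
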